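/- Let E, A ∈ ℝ^{n×n} with E invertible, B ∈ ℝ^{n×m}, C ∈ ℝ^{m×n}, M₀ ∈ ℝ^{m×m} with M₀M₀ᵀ = I. Suppose symmetric G_pc, G_po ∈ ℝ^{n×n} satisfy: A G_pc Eᵀ + E G_pc Aᵀ + BBᵀ = 0; G_pc Eᵀ G_po E = I; M₀ Bᵀ + C G_pc Eᵀ = 0. Then for all s ∈ ℂ where sE − A and −sEᵀ − Aᵀ are invertible: C(sE − A)⁻¹B·Bᵀ(−sEᵀ − Aᵀ)⁻¹Cᵀ = −M₀Bᵀ(−sEᵀ − Aᵀ)⁻¹Cᵀ − C(sE − A)⁻¹BM₀ᵀ, and consequently (C(sE − A)⁻¹B + M₀)(Bᵀ(−sEᵀ − Aᵀ)⁻¹Cᵀ + M₀ᵀ) = I. -/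
import Mathlib


open Matrix

/-- Entrywise complexification of a real matrix. -/
noncomputable def toC {n m : ℕ} (M : Matrix (Fin n) (Fin m) ℝ) : Matrix (Fin n) (Fin m) ℂ :=
  M.map (algebraMap ℝ ℂ)

lemma toC_mul {a b c : ℕ} (M : Matrix (Fin a) (Fin b) ℝ) (N : Matrix (Fin b) (Fin c) ℝ) :
    toC (M * N) = toC M * toC N := Matrix.map_mul

lemma toC_add {a b : ℕ} (M N : Matrix (Fin a) (Fin b) ℝ) :
    toC (M + N) = toC M + toC N := Matrix.map_add _ (by simp) _ _

lemma toC_transpose {a b : ℕ} (M : Matrix (Fin a) (Fin b) ℝ) : toC Mᵀ = (toC M)ᵀ :=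
  Matrix.transpose_map

lemma toC_zero {a b : ℕ} : toC (0 : Matrix (Fin a) (Fin b) ℝ) = 0 := by
  ext i j; simp [toC]

lemma toC_one {a : ℕ} : toC (1 : Matrix (Fin a) (Fin a) ℝ) = 1 :=
  Matrix.map_one _ (map_zero _) (map_one _)

theorem allpass_sufficiency_identity (n m : ℕ)
    (E A : Matrix (Fin n) (Fin n) ℝ) (B : Matrix (Fin n) (Fin m) ℝ)
    (C : Matrix (Fin m) (Fin n) ℝ) (M₀ : Matrix (Fin m) (Fin m) ℝ)
    (hE : IsUnit E) (hM : M₀ * M₀ᵀ = 1)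
    (Gpc Gpo : Matrix (Fin n) (Fin n) ℝ) (hpc : Gpcᵀ = Gpc) (hpo : Gpoᵀ = Gpo)
    (hlyap : A * Gpc * Eᵀ + E * Gpc * Aᵀ + B * Bᵀ = 0)
    (hhsv : Gpc * Eᵀ * Gpo * E = 1)
    (hcon : M₀ * Bᵀ + C * Gpc * Eᵀ = 0) :
    ∀ s : ℂ, IsUnit (s • toC E - toC A) → IsUnit (-s • (toC E)ᵀ - (toC A)ᵀ) →
      (toC C * (s • toC E - toC A)⁻¹ * toC B)
          * ((toC B)ᵀ * (-s • (toC E)ᵀ - (toC A)ᵀ)⁻¹ * (toC C)ᵀ)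
        = -(toC M₀ * (toC B)ᵀ * (-s • (toC E)ᵀ - (toC A)ᵀ)⁻¹ * (toC C)ᵀ)
          - toC C * (s • toC E - toC A)⁻¹ * toC B * (toC M₀)ᵀ ∧
      (toC C * (s • toC E - toC A)⁻¹ * toC B + toC M₀)
          * ((toC B)ᵀ * (-s • (toC E)ᵀ - (toC A)ᵀ)⁻¹ * (toC C)ᵀ + (toC M₀)ᵀ) = 1 := by
  intro s hX hY
  set X : Matrix (Fin n) (Fin n) ℂ := s • toC E - toC A with hXdef
  set Y : Matrix (Fin n) (Fin n) ℂ := -s • (toC E)ᵀ - (toC A)ᵀ with hYdef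
  have hXd : IsUnit X.det := (Matrix.isUnit_iff_isUnit_det _).mp hX
  have hYd : IsUnit Y.det := (Matrix.isUnit_iff_isUnit_det _).mp hY
  have hXinv : X⁻¹ * X = 1 := Matrix.nonsing_inv_mul _ hXd
  have hYinv : Y * Y⁻¹ = 1 := Matrix.mul_nonsing_inv _ hYd
  -- complexified hypotheses
  have h1 : toC A * toC Gpc * (toC E)ᵀ + toC E * toC Gpc * (toC A)ᵀ + toC B * (toC B)ᵀ = 0 := by
    have := congrArg toC hlyap
    simpa only [toC_add, toC_mul, toC_transpose, toC_zero] using this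
  have h2 : toC C * toC Gpc * (toC E)ᵀ = -(toC M₀ * (toC B)ᵀ) := by
    have := congrArg toC hcon
    simp only [toC_add, toC_mul, toC_transpose, toC_zero] at this
    exact eq_neg_of_add_eq_zero_right this
  have h3 : toC E * toC Gpc * (toC C)ᵀ = -(toC B * (toC M₀)ᵀ) := by
    have hconT : B * M₀ᵀ + E * Gpc * Cᵀ = 0 := by
      have := congrArg Matrix.transpose hcon
      simpa [Matrix.transpose_add, Matrix.transpose_mul, hpc, Matrix.mul_assoc] using this
    have := congrArg toC hconT
    simp only [toC_add, toC_mul, toC_transpose, toC_zero] at this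
    exact eq_neg_of_add_eq_zero_right this
  have hMC : toC M₀ * (toC M₀)ᵀ = 1 := by
    have := congrArg toC hM
    simpa only [toC_mul, toC_transpose, toC_one] using this
  -- key algebraic identity
  have key : toC B * (toC B)ᵀ = X * (toC Gpc * (toC E)ᵀ) + toC E * toC Gpc * Y := by
    have hBB : toC B * (toC B)ᵀ
        = -(toC A * toC Gpc * (toC E)ᵀ + toC E * toC Gpc * (toC A)ᵀ) :=
      eq_neg_of_add_eq_zero_right h1
    rw [hBB, hXdef, hYdef]
    simp only [Matrix.sub_mul, Matrix.mul_sub, Matrix.smul_mul, Matrix.mul_smul,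
      Matrix.mul_neg, Matrix.neg_mul, neg_smul, Matrix.mul_assoc, neg_add_rev]
    abel
  -- cancellation helpers
  have hc1 : ∀ P : Matrix (Fin n) (Fin m) ℂ, X⁻¹ * (X * P) = P := fun P => by
    rw [← Matrix.mul_assoc, hXinv, Matrix.one_mul]
  have hc2 : Y * (Y⁻¹ * (toC C)ᵀ) = (toC C)ᵀ := by
    rw [← Matrix.mul_assoc, hYinv, Matrix.one_mul]
  have h2' : toC C * (toC Gpc * ((toC E)ᵀ * (Y⁻¹ * (toC C)ᵀ)))
      = -(toC M₀ * ((toC B)ᵀ * (Y⁻¹ * (toC C)ᵀ))) := by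
    have := congrArg (· * (Y⁻¹ * (toC C)ᵀ)) h2
    simpa only [Matrix.neg_mul, Matrix.mul_assoc] using this
  have h3' : toC C * (X⁻¹ * (toC E * (toC Gpc * (toC C)ᵀ)))
      = -(toC C * (X⁻¹ * (toC B * (toC M₀)ᵀ))) := by
    have := congrArg (fun M => toC C * (X⁻¹ * M)) h3
    simpa only [Matrix.mul_neg, Matrix.mul_assoc] using this
  have part1 : (toC C * X⁻¹ * toC B) * ((toC B)ᵀ * Y⁻¹ * (toC C)ᵀ)
      = -(toC M₀ * (toC B)ᵀ * Y⁻¹ * (toC C)ᵀ) - toC C * X⁻¹ * toC B * (toC M₀)ᵀ := by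
    have e1 : (toC C * X⁻¹ * toC B) * ((toC B)ᵀ * Y⁻¹ * (toC C)ᵀ)
        = toC C * X⁻¹ * (toC B * (toC B)ᵀ) * (Y⁻¹ * (toC C)ᵀ) := by
      simp only [Matrix.mul_assoc]
    rw [e1, key]
    simp only [Matrix.mul_add, Matrix.add_mul, Matrix.mul_assoc]
    rw [hc1, hc2, h2', h3']
    simp only [Matrix.mul_assoc, sub_eq_add_neg]
  refine ⟨part1, ?_⟩
  rw [Matrix.add_mul, Matrix.mul_add, Matrix.mul_add, part1, hMC]
  simp only [Matrix.mul_assoc]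
  abel
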